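/- arXiv:1607.00377 — 2 statements merged into one kernel-verified Lean document; each statement's English description precedes it below -/
import Mathlib

section
/- Let m > 0, let n ≥ 1, let y₁, …, yₙ ∈ ℝ³ be distinct points, let λ₁, …, λₙ : [0,∞) → ℂ be continuous functions, let F̃ : ℂⁿ → ℂⁿ be globally Lipschitz continuous, and let ζ₀ ∈ ℂⁿ. Then there exists τ > 0 and a unique continuously differentiable function ζ : [0,τ] → ℂⁿ with ζ(0) = ζ₀ such that for all t ∈ [0,τ] and all j ∈ {1,…,n}: (1/4π)ζ_j'(t) = (m/4π)ζ_j(t) + Σ_{k≠j} 𝟙{t ≥ |y_j−y_k|} ζ_k(t−|y_j−y_k|)/(4π|y_j−y_k|) + λ_j(t) − Σ_{k=1}^{n} (m/4π) ∫₀^{max(t−|y_j−y_k|,0)} K_{jk}(t−s) ζ_k(s) ds − F̃_j(ζ(t)), where K_{jk}(w) = J₁(m√(w²−|y_j−y_k|²))/√(w²−|y_j−y_k|²) for w > |y_j−y_k|, extended continuously by the value m/2 at w = |y_j−y_k|. -/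
/-!
While `t` is smaller than every separation `|y_j − y_k|`, no delayed term and no off-diagonal
memory integral has switched on, so the system is the integro-differential equation
`ζ' = m ζ + 4πλ − m ∫₀ᵗ K(t − s) ζ(s) ds − 4π F̃(ζ)` with `K(w) = J₁(mw)/w`. Since `J₁` is
1-Lipschitz with `J₁(0) = 0` and `J₁'(0) = 1/2`, this kernel is continuous and bounded by `|m|`,
so the right-hand side is Lipschitz in the sup norm with constant `|m| + m²τ + 4πL`. For small `τ`
the Picard map `ζ ↦ ζ₀ + ∫₀ᵗ (…)` is therefore a contraction of `C([0, τ], ℂⁿ)`: its fixed point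
is a solution, and every solution is a fixed point.
-/

open Real Filter Set intervalIntegral

/-- The Bessel function of the first kind of order one,
`J₁(x) = (1/π) ∫₀^π cos(θ − x sin θ) dθ`. -/
noncomputable def besselJ1 (x : ℝ) : ℝ :=
  (1 / π) * ∫ θ in (0:ℝ)..π, Real.cos (θ - x * Real.sin θ)

/-- The kernel `w ↦ J₁(m√(w²−r²))/√(w²−r²)`, extended continuously by the value
`m/2` at `w = r` (and below). -/
noncomputable def besselKernel (m r w : ℝ) : ℝ :=
  if r < w then besselJ1 (m * Real.sqrt (w ^ 2 - r ^ 2)) / Real.sqrt (w ^ 2 - r ^ 2)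
  else m / 2

/-- `ζ` (with derivative `ζ'`) is a continuously differentiable solution on `[0,τ]`
of the delay integro-differential system
`(1/4π)ζ_j'(t) = (m/4π)ζ_j(t) + Σ_{k≠j} 𝟙{t ≥ |y_j−y_k|} ζ_k(t−|y_j−y_k|)/(4π|y_j−y_k|)
  + λ_j(t) − Σ_k (m/4π) ∫₀^{max(t−|y_j−y_k|,0)} K_{jk}(t−s) ζ_k(s) ds − F̃_j(ζ(t))`
with initial value `ζ₀`. -/
def IsDelaySolution {n : ℕ} (m : ℝ) (y : Fin n → EuclideanSpace ℝ (Fin 3))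
    (lam : Fin n → ℝ → ℂ) (F : (Fin n → ℂ) → (Fin n → ℂ)) (ζ₀ : Fin n → ℂ)
    (τ : ℝ) (ζ ζ' : ℝ → Fin n → ℂ) : Prop :=
  (∀ t ∈ Icc (0:ℝ) τ, HasDerivWithinAt ζ (ζ' t) (Icc 0 τ) t) ∧
  ContinuousOn ζ' (Icc 0 τ) ∧
  ζ 0 = ζ₀ ∧
  ∀ t ∈ Icc (0:ℝ) τ, ∀ j : Fin n,
    (1 / (4 * π)) * ζ' t j
      = (m / (4 * π)) * ζ t j
        + (∑ k : Fin n, if k ≠ j then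
            (if dist (y j) (y k) ≤ t then
              ζ (t - dist (y j) (y k)) k / (4 * π * dist (y j) (y k)) else 0)
          else 0)
        + lam j t
        - (∑ k : Fin n, (m / (4 * π)) *
            ∫ s in (0:ℝ)..(max (t - dist (y j) (y k)) 0),
              (besselKernel m (dist (y j) (y k)) (t - s) : ℂ) * ζ s k)
        - F (ζ t) j

open Topology MeasureTheory

theorem lipschitzWith_one_besselJ1 : LipschitzWith 1 besselJ1 := by
  refine LipschitzWith.of_dist_le_mul fun x y => ?_
  have hint : ∀ x : ℝ, IntervalIntegrable (fun θ => cos (θ - x * sin θ)) volume 0 π :=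
    fun x => (by fun_prop : Continuous fun θ => cos (θ - x * sin θ)).intervalIntegrable 0 π
  have hbound : ∀ θ, ‖cos (θ - x * sin θ) - cos (θ - y * sin θ)‖ ≤ |x - y| := fun θ =>
    calc |cos (θ - x * sin θ) - cos (θ - y * sin θ)|
        ≤ |(θ - x * sin θ) - (θ - y * sin θ)| := abs_cos_sub_cos_le _ _
      _ = |x - y| * |sin θ| := by rw [← abs_mul, ← abs_neg]; ring_nf
      _ ≤ |x - y| := mul_le_of_le_one_right (abs_nonneg _) (abs_sin_le_one θ)
  have hI : ‖∫ θ in (0:ℝ)..π, cos (θ - x * sin θ) - cos (θ - y * sin θ)‖ ≤ |x - y| * π := by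
    simpa [abs_of_pos pi_pos] using
      norm_integral_le_of_norm_le_const (a := 0) (b := π) fun θ _ => hbound θ
  rw [dist_eq_norm, dist_eq_norm, besselJ1, besselJ1, ← mul_sub, ← integral_sub (hint x) (hint y),
    norm_mul, norm_div, norm_one, Real.norm_of_nonneg pi_pos.le, NNReal.coe_one, one_mul]
  calc 1 / π * ‖∫ θ in (0:ℝ)..π, cos (θ - x * sin θ) - cos (θ - y * sin θ)‖
      ≤ 1 / π * (|x - y| * π) := by gcongr
    _ = ‖x - y‖ := by field_simp; rfl

theorem besselJ1_zero : besselJ1 0 = 0 := by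
  simp [besselJ1, integral_cos]

theorem abs_besselJ1_le (x : ℝ) : |besselJ1 x| ≤ |x| := by
  simpa [besselJ1_zero] using lipschitzWith_one_besselJ1.dist_le_mul x 0

theorem hasDerivAt_besselJ1_zero : HasDerivAt besselJ1 (1 / 2) 0 := by
  have hF : ∀ θ x : ℝ, HasDerivAt (fun x => cos (θ - x * sin θ)) (sin θ * sin (θ - x * sin θ)) x :=
    fun θ x => by
      convert ((hasDerivAt_mul_const (sin θ)).const_sub θ).cos using 1
      ring
  have hbound : ∀ θ x : ℝ, ‖sin θ * sin (θ - x * sin θ)‖ ≤ 1 := fun θ x => by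
    rw [norm_mul]
    exact mul_le_one₀ (abs_sin_le_one _) (norm_nonneg _) (abs_sin_le_one _)
  obtain ⟨-, hI⟩ := hasDerivAt_integral_of_dominated_loc_of_deriv_le (μ := volume) (a := 0) (b := π)
    (bound := fun _ => 1) (Metric.ball_mem_nhds (0:ℝ) one_pos)
    (Eventually.of_forall fun x =>
      (by fun_prop : Continuous fun θ => cos (θ - x * sin θ)).aestronglyMeasurable)
    ((by fun_prop : Continuous fun θ => cos (θ - 0 * sin θ)).intervalIntegrable 0 π)
    (by fun_prop : Continuous fun θ => sin θ * sin (θ - 0 * sin θ)).aestronglyMeasurable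
    (Eventually.of_forall fun θ _ x _ => hbound θ x) intervalIntegrable_const
    (Eventually.of_forall fun θ _ x _ => hF θ x)
  have hval : ∫ θ in (0:ℝ)..π, sin θ * sin (θ - 0 * sin θ) = π / 2 := by
    simp [← sq, integral_sin_sq]
  rw [hval] at hI
  have hπ : 1 / π * (π / 2) = 1 / 2 := by field_simp
  rw [← hπ]
  exact hI.const_mul (1 / π)

theorem abs_besselKernel_le (m : ℝ) {r : ℝ} (hr : 0 ≤ r) (w : ℝ) : |besselKernel m r w| ≤ |m| := by
  unfold besselKernel
  split_ifs with hrw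
  · have hs : 0 < √(w ^ 2 - r ^ 2) := sqrt_pos.2 (by nlinarith)
    rw [abs_div, abs_of_pos hs, div_le_iff₀ hs]
    exact (abs_besselJ1_le _).trans_eq (by rw [abs_mul, abs_of_pos hs])
  · rw [abs_div, abs_two]
    linarith [abs_nonneg m]

theorem hasDerivAt_besselJ1_mul_zero (m : ℝ) :
    HasDerivAt (fun x => besselJ1 (m * x)) (m / 2) 0 := by
  have hJ : HasDerivAt besselJ1 (1 / 2) (m * 0) := by rw [mul_zero]; exact hasDerivAt_besselJ1_zero
  exact (hJ.comp 0 ((hasDerivAt_id 0).const_mul m)).congr_deriv (by ring)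

theorem besselKernel_zero_eq_dslope (m : ℝ) :
    besselKernel m 0 = fun w => dslope (fun x => besselJ1 (m * x)) 0 (max w 0) := by
  ext w
  rcases le_or_gt w 0 with hw | hw
  · rw [besselKernel, if_neg hw.not_gt, max_eq_right hw, dslope_same,
      (hasDerivAt_besselJ1_mul_zero m).deriv]
  · rw [besselKernel, if_pos hw, max_eq_left hw.le, dslope_of_ne _ hw.ne', slope_def_field]
    simp [sqrt_sq hw.le, besselJ1_zero]

theorem continuous_besselKernel_zero (m : ℝ) : Continuous (besselKernel m 0) := by
  have hJ : Continuous fun x => besselJ1 (m * x) :=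
    lipschitzWith_one_besselJ1.continuous.comp (continuous_const_mul m)
  rw [besselKernel_zero_eq_dslope]
  refine (continuousOn_univ.1 ?_).comp (continuous_id.max continuous_const)
  exact (continuousOn_dslope univ_mem).2
    ⟨hJ.continuousOn, (hasDerivAt_besselJ1_mul_zero m).differentiableAt⟩

section FunctionalODE

variable {E : Type*} [NormedAddCommGroup E] [NormedSpace ℝ E]

structure IsFunctionalPicardLindelof (Φ : (ℝ → E) → ℝ → E) (τ K : ℝ) : Prop where
  nonneg : 0 ≤ τ
  continuous : ∀ {g}, Continuous g → Continuous (Φ g)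
  eqOn : ∀ {g h}, EqOn g h (Icc 0 τ) → EqOn (Φ g) (Φ h) (Icc 0 τ)
  norm_sub_le : ∀ {g h}, Continuous g → Continuous h → ∀ {d}, (∀ u, ‖g u - h u‖ ≤ d) →
    ∀ s ∈ Icc 0 τ, ‖Φ g s - Φ h s‖ ≤ K * d
  mul_lt_one : K * τ < 1

def IsFunctionalODESolution (Φ : (ℝ → E) → ℝ → E) (ζ₀ : E) (τ : ℝ) (ζ ζ' : ℝ → E) : Prop :=
  (∀ t ∈ Icc 0 τ, HasDerivWithinAt ζ (ζ' t) (Icc 0 τ) t) ∧ ContinuousOn ζ' (Icc 0 τ) ∧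
    ζ 0 = ζ₀ ∧ ∀ t ∈ Icc 0 τ, ζ' t = Φ ζ t

variable {Φ : (ℝ → E) → ℝ → E} {ζ₀ : E} {τ K : ℝ}

theorem IsFunctionalODESolution.continuousOn {ζ ζ' : ℝ → E}
    (hζ : IsFunctionalODESolution Φ ζ₀ τ ζ ζ') : ContinuousOn ζ (Icc 0 τ) :=
  fun t ht => (hζ.1 t ht).continuousWithinAt

namespace IsFunctionalPicardLindelof

theorem continuous_integral_extend (hΦ : IsFunctionalPicardLindelof Φ τ K) (ζ₀ : E)
    (f : C(Icc (0:ℝ) τ, E)) :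
    Continuous fun t => ζ₀ + ∫ s in (0:ℝ)..t, Φ (IccExtend hΦ.nonneg f) s :=
  continuous_const.add <| continuous_primitive
    (hΦ.continuous f.continuous.Icc_extend').intervalIntegrable 0

noncomputable def picardMap (hΦ : IsFunctionalPicardLindelof Φ τ K) (ζ₀ : E)
    (f : C(Icc (0:ℝ) τ, E)) : C(Icc (0:ℝ) τ, E) where
  toFun t := ζ₀ + ∫ s in (0:ℝ)..t, Φ (IccExtend hΦ.nonneg f) s
  continuous_toFun := (hΦ.continuous_integral_extend ζ₀ f).comp continuous_subtype_val

theorem picardMap_apply (hΦ : IsFunctionalPicardLindelof Φ τ K) (ζ₀ : E)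
    (f : C(Icc (0:ℝ) τ, E)) (t : Icc (0:ℝ) τ) :
    hΦ.picardMap ζ₀ f t = ζ₀ + ∫ s in (0:ℝ)..t, Φ (IccExtend hΦ.nonneg f) s :=
  rfl

theorem contractingWith_picardMap (hΦ : IsFunctionalPicardLindelof Φ τ K) (ζ₀ : E) :
    ContractingWith (K * τ).toNNReal (hΦ.picardMap ζ₀) := by
  refine ⟨Real.toNNReal_lt_one.2 hΦ.mul_lt_one, LipschitzWith.of_dist_le_mul fun f g => ?_⟩
  have hfg : ∀ u, ‖IccExtend hΦ.nonneg f u - IccExtend hΦ.nonneg g u‖ ≤ dist f g :=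
    fun u => by rw [← dist_eq_norm]; exact ContinuousMap.dist_apply_le_dist _
  rw [ContinuousMap.dist_le (by positivity)]
  intro t
  have hbound := hΦ.norm_sub_le f.continuous.Icc_extend' g.continuous.Icc_extend' hfg
  -- `K` is not assumed nonnegative: the bound at `s = t` itself gives `0 ≤ K * dist f g`
  have hKd : 0 ≤ K * dist f g := (norm_nonneg _).trans (hbound t t.2)
  rw [dist_eq_norm, picardMap_apply, picardMap_apply, add_sub_add_left_eq_sub,
    ← integral_sub ((hΦ.continuous f.continuous.Icc_extend').intervalIntegrable 0 t)
      ((hΦ.continuous g.continuous.Icc_extend').intervalIntegrable 0 t)]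
  calc ‖∫ s in (0:ℝ)..t, (Φ (IccExtend hΦ.nonneg f) s - Φ (IccExtend hΦ.nonneg g) s)‖
      ≤ K * dist f g * |(t:ℝ) - 0| := norm_integral_le_of_norm_le_const fun s hs =>
        hbound s (uIoc_subset_uIcc.trans (uIcc_of_le t.2.1).subset |>.trans
          (Icc_subset_Icc_right t.2.2) hs)
    _ ≤ K * dist f g * τ := by rw [sub_zero, abs_of_nonneg t.2.1]; gcongr; exact t.2.2
    _ ≤ (K * τ).toNNReal * dist f g := by
        rw [mul_right_comm]; gcongr; exact Real.le_coe_toNNReal _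

end IsFunctionalPicardLindelof

variable [CompleteSpace E]

theorem IsFunctionalODESolution.eq_add_integral {ζ ζ' : ℝ → E}
    (hζ : IsFunctionalODESolution Φ ζ₀ τ ζ ζ') {t : ℝ} (ht : t ∈ Icc 0 τ) :
    ζ t = ζ₀ + ∫ s in (0:ℝ)..t, Φ ζ s := by
  obtain ⟨hderiv, hcont, hinit, heq⟩ := id hζ
  have hsub : Icc 0 t ⊆ Icc 0 τ := Icc_subset_Icc_right ht.2
  have hftc : ∫ s in (0:ℝ)..t, ζ' s = ζ t - ζ 0 := by
    refine integral_eq_sub_of_hasDerivAt_of_le ht.1 (hζ.continuousOn.mono hsub)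
      (fun s hs => (hderiv s (hsub (Ioo_subset_Icc_self hs))).hasDerivAt ?_) ?_
    · exact Icc_mem_nhds hs.1 (hs.2.trans_le ht.2)
    · exact (hcont.mono (by rwa [uIcc_of_le ht.1])).intervalIntegrable
  rw [← integral_congr fun s hs => heq s (hsub (by rwa [uIcc_of_le ht.1] at hs)), hftc, hinit]
  abel

namespace IsFunctionalPicardLindelof

theorem isFixedPt_picardMap (hΦ : IsFunctionalPicardLindelof Φ τ K) {ζ ζ' : ℝ → E}
    (hζ : IsFunctionalODESolution Φ ζ₀ τ ζ ζ') :
    Function.IsFixedPt (hΦ.picardMap ζ₀)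
      ⟨(Icc 0 τ).domRestrict ζ, hζ.continuousOn.domRestrict⟩ := by
  ext t
  have hext : EqOn (IccExtend hΦ.nonneg ((Icc 0 τ).domRestrict ζ)) ζ (Icc 0 τ) :=
    fun s hs => IccExtend_of_mem _ _ hs
  rw [picardMap_apply, ContinuousMap.coe_mk, domRestrict_apply, hζ.eq_add_integral t.2]
  congr 1
  refine integral_congr fun s hs => hΦ.eqOn hext ?_
  rw [uIcc_of_le t.2.1] at hs
  exact Icc_subset_Icc_right t.2.2 hs

theorem eqOn_of_isFunctionalODESolution (hΦ : IsFunctionalPicardLindelof Φ τ K)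
    {ζ ζ' η η' : ℝ → E}
    (hζ : IsFunctionalODESolution Φ ζ₀ τ ζ ζ') (hη : IsFunctionalODESolution Φ ζ₀ τ η η') :
    EqOn ζ η (Icc 0 τ) := fun t ht =>
  congrArg (fun f : C(Icc (0:ℝ) τ, E) => f ⟨t, ht⟩) <|
    (hΦ.contractingWith_picardMap ζ₀).fixedPoint_unique' (hΦ.isFixedPt_picardMap hζ)
      (hΦ.isFixedPt_picardMap hη)

theorem exists_isFunctionalODESolution (hΦ : IsFunctionalPicardLindelof Φ τ K) (ζ₀ : E) :
    ∃ ζ ζ' : ℝ → E, IsFunctionalODESolution Φ ζ₀ τ ζ ζ' := by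
  set f := ContractingWith.fixedPoint (hΦ.picardMap ζ₀) (hΦ.contractingWith_picardMap ζ₀)
  have hfix : hΦ.picardMap ζ₀ f = f := (hΦ.contractingWith_picardMap ζ₀).fixedPoint_isFixedPt
  set ζ := IccExtend hΦ.nonneg f
  have hζ : Continuous ζ := f.continuous.Icc_extend'
  have hζ_eq : ∀ t ∈ Icc 0 τ, ζ t = ζ₀ + ∫ s in (0:ℝ)..t, Φ ζ s := fun t ht =>
    (IccExtend_of_mem _ _ ht).trans (by rw [← hfix]; rfl)
  refine ⟨ζ, Φ ζ, fun t ht => ?_, (hΦ.continuous hζ).continuousOn,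
    by rw [hζ_eq 0 ⟨le_rfl, hΦ.nonneg⟩, integral_same, add_zero], fun _ _ => rfl⟩
  exact (((hΦ.continuous hζ).integral_hasStrictDerivAt 0 t).hasDerivAt.hasDerivWithinAt.const_add
    ζ₀).congr_of_mem hζ_eq ht

end IsFunctionalPicardLindelof

end FunctionalODE

section VolterraConvolution

variable {E : Type*} [NormedAddCommGroup E] [NormedSpace ℝ E] {k : ℝ → ℝ} {g h : ℝ → E}

theorem continuous_integral_kernel_smul (hk : Continuous k) (hg : Continuous g) :
    Continuous fun t => ∫ s in (0:ℝ)..t, k (t - s) • g s :=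
  continuous_parametric_intervalIntegral_of_continuous (by fun_prop) continuous_id

theorem norm_integral_kernel_smul_sub_le (hk : Continuous k) (hg : Continuous g)
    (hh : Continuous h) {C d t : ℝ} (hkC : ∀ u, |k u| ≤ C) (hgh : ∀ u, ‖g u - h u‖ ≤ d)
    (ht : 0 ≤ t) :
    ‖(∫ s in (0:ℝ)..t, k (t - s) • g s) - ∫ s in (0:ℝ)..t, k (t - s) • h s‖ ≤ C * d * t := by
  have hint : ∀ g : ℝ → E, Continuous g →
      IntervalIntegrable (fun s => k (t - s) • g s) volume 0 t :=
    fun g hg => (by fun_prop : Continuous fun s => k (t - s) • g s).intervalIntegrable 0 t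
  rw [← integral_sub (hint g hg) (hint h hh)]
  have hC : 0 ≤ C := (abs_nonneg _).trans (hkC 0)
  simpa only [← smul_sub, sub_zero, abs_of_nonneg ht] using
    norm_integral_le_of_norm_le_const (a := 0) (b := t) fun s _ =>
      (norm_smul_le _ _).trans (mul_le_mul (hkC _) (hgh s) (norm_nonneg _) hC)

end VolterraConvolution

/-- The system while `t` is below every separation `dist (y j) (y k)`, when no delayed term and
no off-diagonal memory integral has switched on yet.  `lam` is read at `max t 0` so that
`decoupledRHS m lam F g` is continuous on all of `ℝ` for continuous `g`. -/
noncomputable def decoupledRHS {n : ℕ} (m : ℝ) (lam : Fin n → ℝ → ℂ)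
    (F : (Fin n → ℂ) → (Fin n → ℂ)) (g : ℝ → Fin n → ℂ) (t : ℝ) : Fin n → ℂ :=
  m • g t + (4 * π) • (fun j => lam j (max t 0))
    - m • (∫ s in (0:ℝ)..t, besselKernel m 0 (t - s) • g s) - (4 * π) • F (g t)

theorem norm_decoupledRHS_sub_le {n : ℕ} {m : ℝ} {lam : Fin n → ℝ → ℂ}
    {F : (Fin n → ℂ) → (Fin n → ℂ)} {L : NNReal} (hF : LipschitzWith L F)
    {g h : ℝ → Fin n → ℂ} (hg : Continuous g) (hh : Continuous h) {d : ℝ}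
    (hgh : ∀ u, ‖g u - h u‖ ≤ d) {s : ℝ} (hs : 0 ≤ s) :
    ‖decoupledRHS m lam F g s - decoupledRHS m lam F h s‖
      ≤ |m| * d + |m| * (|m| * d * s) + 4 * π * (L * d) := by
  have hconv := norm_integral_kernel_smul_sub_le (continuous_besselKernel_zero m) hg hh
    (abs_besselKernel_le m le_rfl) hgh hs
  have hFd : ‖F (g s) - F (h s)‖ ≤ L * d := by
    simpa only [dist_eq_norm] using hF.dist_le_mul_of_le ((dist_eq_norm _ _).trans_le (hgh s))
  calc ‖decoupledRHS m lam F g s - decoupledRHS m lam F h s‖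
      = ‖m • (g s - h s)
          - m • ((∫ u in (0:ℝ)..s, besselKernel m 0 (s - u) • g u)
            - ∫ u in (0:ℝ)..s, besselKernel m 0 (s - u) • h u)
          - (4 * π) • (F (g s) - F (h s))‖ := by
        congr 1; simp only [decoupledRHS, smul_sub]; abel
    _ ≤ |m| * d + |m| * (|m| * d * s) + 4 * π * (L * d) := by
        refine (norm_sub_le _ _).trans
          (add_le_add ((norm_sub_le _ _).trans (add_le_add ?_ ?_)) ?_)
          <;> rw [norm_smul, Real.norm_eq_abs]
        · exact mul_le_mul_of_nonneg_left (hgh s) (abs_nonneg m)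
        · exact mul_le_mul_of_nonneg_left hconv (abs_nonneg m)
        · rw [abs_of_pos (by positivity)]
          exact mul_le_mul_of_nonneg_left hFd (by positivity)

theorem isFunctionalPicardLindelof_decoupledRHS {n : ℕ} {m : ℝ} {lam : Fin n → ℝ → ℂ}
    (hlam : ∀ j, ContinuousOn (lam j) (Ici 0)) {F : (Fin n → ℂ) → (Fin n → ℂ)} {L : NNReal}
    (hF : LipschitzWith L F) {τ : ℝ} (hτ : 0 ≤ τ)
    (hτK : (|m| + |m| * |m| * τ + 4 * π * L) * τ < 1) :
    IsFunctionalPicardLindelof (decoupledRHS m lam F) τ (|m| + |m| * |m| * τ + 4 * π * L) := by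
  have hK := continuous_besselKernel_zero m
  refine ⟨hτ, fun hg => ?_, fun {g h} hgh t ht => ?_, fun hg hh d hgh s hs => ?_, hτK⟩
  · have hlam' : Continuous fun t => fun j => lam j (max t 0) := continuous_pi fun j =>
      (hlam j).comp_continuous (by fun_prop) fun t => le_max_right t 0
    exact ((hg.const_smul m).add (hlam'.const_smul (4 * π))).sub
      ((continuous_integral_kernel_smul hK hg).const_smul m) |>.sub
      ((hF.continuous.comp hg).const_smul (4 * π))
  · have hint : (∫ s in (0:ℝ)..t, besselKernel m 0 (t - s) • g s)
        = ∫ s in (0:ℝ)..t, besselKernel m 0 (t - s) • h s := by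
      refine integral_congr fun s hs => ?_
      rw [uIcc_of_le ht.1] at hs
      rw [hgh (Icc_subset_Icc_right ht.2 hs)]
    simp only [decoupledRHS, hgh ht, hint]
  · have hd : 0 ≤ d := (norm_nonneg _).trans (hgh 0)
    have hs' : |m| * |m| * d * s ≤ |m| * |m| * d * τ := by gcongr; exact hs.2
    refine (norm_decoupledRHS_sub_le hF hg hh hgh hs.1).trans ?_
    nlinarith

theorem delaySystem_rhs_eq_decoupledRHS {n : ℕ} {m : ℝ} {y : Fin n → EuclideanSpace ℝ (Fin 3)}
    {lam : Fin n → ℝ → ℂ} {F : (Fin n → ℂ) → (Fin n → ℂ)} {τ : ℝ}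
    (hsep : ∀ j k, j ≠ k → τ < dist (y j) (y k)) {ζ : ℝ → Fin n → ℂ}
    (hζ : ContinuousOn ζ (Icc 0 τ)) {t : ℝ} (ht : t ∈ Icc 0 τ) (j : Fin n) :
    (m / (4 * π)) * ζ t j
        + (∑ k : Fin n, if k ≠ j then
            (if dist (y j) (y k) ≤ t then
              ζ (t - dist (y j) (y k)) k / (4 * π * dist (y j) (y k)) else 0)
          else 0)
        + lam j t
        - (∑ k : Fin n, (m / (4 * π)) *
            ∫ s in (0:ℝ)..(max (t - dist (y j) (y k)) 0),
              (besselKernel m (dist (y j) (y k)) (t - s) : ℂ) * ζ s k)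
        - F (ζ t) j
      = (1 / (4 * π)) * decoupledRHS m lam F ζ t j := by
  have hfar : ∀ k, k ≠ j → t < dist (y j) (y k) := fun k hk => ht.2.trans_lt (hsep j k hk.symm)
  have hdelay : (∑ k : Fin n, if k ≠ j then
      (if dist (y j) (y k) ≤ t then
        ζ (t - dist (y j) (y k)) k / (4 * π * dist (y j) (y k)) else 0)
      else (0 : ℂ)) = 0 :=
    Finset.sum_eq_zero fun k _ => by
      by_cases hk : k ≠ j
      · rw [if_pos hk, if_neg (hfar k hk).not_ge]
      · rw [if_neg hk]
  have hmemory : (∑ k : Fin n, (m / (4 * π) : ℂ) *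
      ∫ s in (0:ℝ)..(max (t - dist (y j) (y k)) 0),
        (besselKernel m (dist (y j) (y k)) (t - s) : ℂ) * ζ s k)
      = (m / (4 * π) : ℂ) * ∫ s in (0:ℝ)..t, (besselKernel m 0 (t - s) : ℂ) * ζ s j := by
    rw [Finset.sum_eq_single j (fun k _ hk => by
      rw [max_eq_right (by linarith [hfar k hk]), integral_same, mul_zero]) (by simp)]
    rw [dist_self, sub_zero, max_eq_left ht.1]
  have hint : IntervalIntegrable (fun s => besselKernel m 0 (t - s) • ζ s) volume 0 t := by
    refine ContinuousOn.intervalIntegrable ?_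
    rw [uIcc_of_le ht.1]
    exact ((continuous_besselKernel_zero m).comp (continuous_sub_left t)).continuousOn.smul
      (hζ.mono (Icc_subset_Icc_right ht.2))
  have hcomponent : (∫ s in (0:ℝ)..t, besselKernel m 0 (t - s) • ζ s) j
      = ∫ s in (0:ℝ)..t, (besselKernel m 0 (t - s) : ℂ) * ζ s j := by
    simpa [Complex.real_smul] using
      ((ContinuousLinearMap.proj (R := ℝ) (φ := fun _ : Fin n => ℂ) j).intervalIntegral_comp_comm
        hint).symm
  rw [hdelay, hmemory, decoupledRHS]
  simp only [Pi.sub_apply, Pi.add_apply, Pi.smul_apply, hcomponent, Complex.real_smul,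
    max_eq_left ht.1]
  field_simp
  push_cast
  ring

theorem isDelaySolution_iff {n : ℕ} {m : ℝ} {y : Fin n → EuclideanSpace ℝ (Fin 3)}
    {lam : Fin n → ℝ → ℂ} {F : (Fin n → ℂ) → (Fin n → ℂ)} {ζ₀ : Fin n → ℂ} {τ : ℝ}
    (hsep : ∀ j k, j ≠ k → τ < dist (y j) (y k)) {ζ ζ' : ℝ → Fin n → ℂ} :
    IsDelaySolution m y lam F ζ₀ τ ζ ζ'
      ↔ IsFunctionalODESolution (decoupledRHS m lam F) ζ₀ τ ζ ζ' := by
  refine and_congr_right fun hderiv => and_congr_right fun _ => and_congr_right fun _ =>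
    forall₂_congr fun t ht => ?_
  have hζ : ContinuousOn ζ (Icc 0 τ) := fun t ht => (hderiv t ht).continuousWithinAt
  have hπ : (1 / (4 * π) : ℂ) ≠ 0 := by simp [Real.pi_ne_zero]
  simp only [delaySystem_rhs_eq_decoupledRHS hsep hζ ht, mul_right_inj' hπ, funext_iff]

theorem Function.Injective.eventually_lt_dist {ι X : Type*} [Finite ι] [MetricSpace X]
    {y : ι → X} (hy : Function.Injective y) :
    ∀ᶠ τ in 𝓝 (0:ℝ), ∀ j k, j ≠ k → τ < dist (y j) (y k) :=
  eventually_all.2 fun _ => eventually_all.2 fun _ => eventually_imp_distrib_left.2 fun hjk =>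
    eventually_lt_nhds (dist_pos.2 (hy.ne hjk))

theorem delay_system_local_wellposedness_general
    (m : ℝ) (n : ℕ)
    (y : Fin n → EuclideanSpace ℝ (Fin 3)) (hy : Function.Injective y)
    (lam : Fin n → ℝ → ℂ) (hlam : ∀ j, ContinuousOn (lam j) (Ici 0))
    (F : (Fin n → ℂ) → (Fin n → ℂ)) (L : NNReal) (hF : LipschitzWith L F)
    (ζ₀ : Fin n → ℂ) :
    ∃ τ > 0,
      (∃ ζ ζ' : ℝ → Fin n → ℂ, IsDelaySolution m y lam F ζ₀ τ ζ ζ') ∧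
      (∀ ζ ζ' η η' : ℝ → Fin n → ℂ, IsDelaySolution m y lam F ζ₀ τ ζ ζ' →
        IsDelaySolution m y lam F ζ₀ τ η η' → EqOn ζ η (Icc 0 τ)) := by
  have hsmall : ∀ᶠ τ in 𝓝 (0:ℝ), (|m| + |m| * |m| * τ + 4 * π * L) * τ < 1 :=
    Tendsto.eventually_lt_const one_pos <| by
      simpa using (by fun_prop : Continuous fun τ : ℝ =>
        (|m| + |m| * |m| * τ + 4 * π * L) * τ).tendsto 0
  obtain ⟨τ, ⟨hsep, hτK⟩, hτ⟩ :=
    (((hy.eventually_lt_dist.and hsmall).filter_mono nhdsWithin_le_nhds).and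
      (self_mem_nhdsWithin (s := Ioi 0))).exists
  have hΦ := isFunctionalPicardLindelof_decoupledRHS hlam hF (le_of_lt hτ) hτK
  refine ⟨τ, hτ, ?_, fun ζ ζ' η η' hζ hη => ?_⟩
  · obtain ⟨ζ, ζ', hζ⟩ := hΦ.exists_isFunctionalODESolution ζ₀
    exact ⟨ζ, ζ', (isDelaySolution_iff hsep).2 hζ⟩
  · exact hΦ.eqOn_of_isFunctionalODESolution ((isDelaySolution_iff hsep).1 hζ)
      ((isDelaySolution_iff hsep).1 hη)

/-- Let `m > 0`, `n ≥ 1`, let `y₁,…,yₙ ∈ ℝ³` be distinct, let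
`λ₁,…,λₙ : [0,∞) → ℂ` be continuous, let `F̃ : ℂⁿ → ℂⁿ` be globally Lipschitz
and let `ζ₀ ∈ ℂⁿ`.  Then there is `τ > 0` and a unique continuously differentiable
`ζ : [0,τ] → ℂⁿ` with `ζ(0) = ζ₀` solving, for all `t ∈ [0,τ]` and `j`,
`(1/4π)ζ_j'(t) = (m/4π)ζ_j(t) + Σ_{k≠j} 𝟙{t ≥ |y_j−y_k|} ζ_k(t−|y_j−y_k|)/(4π|y_j−y_k|)
  + λ_j(t) − Σ_k (m/4π) ∫₀^{max(t−|y_j−y_k|,0)} K_{jk}(t−s) ζ_k(s) ds − F̃_j(ζ(t))`,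
where `K_{jk}(w) = J₁(m√(w²−|y_j−y_k|²))/√(w²−|y_j−y_k|²)` is extended continuously
by `m/2` at `w = |y_j−y_k|`. -/
theorem delay_system_local_wellposedness
    (m : ℝ) (hm : 0 < m) (n : ℕ) (hn : 1 ≤ n)
    (y : Fin n → EuclideanSpace ℝ (Fin 3)) (hy : Function.Injective y)
    (lam : Fin n → ℝ → ℂ) (hlam : ∀ j, ContinuousOn (lam j) (Ici 0))
    (F : (Fin n → ℂ) → (Fin n → ℂ)) (L : NNReal) (hF : LipschitzWith L F)
    (ζ₀ : Fin n → ℂ) :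
    ∃ τ > 0,
      (∃ ζ ζ' : ℝ → Fin n → ℂ, IsDelaySolution m y lam F ζ₀ τ ζ ζ') ∧
      (∀ ζ ζ' η η' : ℝ → Fin n → ℂ, IsDelaySolution m y lam F ζ₀ τ ζ ζ' →
        IsDelaySolution m y lam F ζ₀ τ η η' → EqOn ζ η (Icc 0 τ)) :=
  delay_system_local_wellposedness_general m n y hy lam hlam F L hF ζ₀
end

section
/- Let m > 0. There exists a constant C = C(m) > 0 such that for every t > 0 and every h ∈ L²([0,t]; ℂ): | ∫₀^t ∫₀^t \overline{h(s)} h(s') ( ∫₀^∞ ( sin((t−s)√(r²+m²)) sin((t−s')√(r²+m²)) / (r²+m²) ) dr ) ds ds' | ≤ C t ∫₀^t |h(s)|² ds. -/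
open Real Set Filter MeasureTheory intervalIntegral

/-!
Since `|sin| ≤ 1`, the inner `r`-integral is bounded, uniformly in `s` and `s'`, by
`∫₀^∞ dr / (r² + m²) = π / (2m)`. For a kernel bounded by `K`, the pointwise inequality
`2 |h(s)| |h(s')| ≤ |h(s)|² + |h(s')|²` bounds the double integral by `K t ∫₀^t |h|²`.
-/

lemma inv_sq_add_sq_eq (m r : ℝ) (hm : m ≠ 0) :
    (r ^ 2 + m ^ 2)⁻¹ = (m ^ 2)⁻¹ * (1 + (r / m) ^ 2)⁻¹ := by
  rw [← mul_inv]
  field_simp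
  ring

lemma integrable_inv_sq_add_sq {m : ℝ} (hm : m ≠ 0) :
    Integrable fun r : ℝ => (r ^ 2 + m ^ 2)⁻¹ := by
  simpa only [inv_sq_add_sq_eq _ _ hm] using
    (integrable_inv_one_add_sq.comp_div hm).const_mul (m ^ 2)⁻¹

lemma integral_Ioi_inv_sq_add_sq {m : ℝ} (hm : 0 < m) :
    ∫ r in Ioi (0:ℝ), (r ^ 2 + m ^ 2)⁻¹ = π / (2 * m) := by
  have := integral_comp_mul_left_Ioi (fun u : ℝ => (1 + u ^ 2)⁻¹) 0 (inv_pos.mpr hm)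
  simp only [mul_zero, integral_Ioi_inv_one_add_sq, arctan_zero, sub_zero, smul_eq_mul,
    inv_inv] at this
  simp_rw [inv_sq_add_sq_eq _ _ hm.ne', MeasureTheory.integral_const_mul, div_eq_inv_mul _ m,
    this]
  field_simp

lemma abs_integral_sin_mul_sin_div_sq_add_sq_le {m : ℝ} (hm : 0 < m) (a b : ℝ) :
    |∫ r in Ioi (0:ℝ), sin (a * √(r ^ 2 + m ^ 2)) * sin (b * √(r ^ 2 + m ^ 2)) /
      (r ^ 2 + m ^ 2)| ≤ π / (2 * m) := by
  rw [← integral_Ioi_inv_sq_add_sq hm, ← Real.norm_eq_abs]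
  refine norm_integral_le_of_norm_le (integrable_inv_sq_add_sq hm.ne').integrableOn
    (Eventually.of_forall fun r => ?_)
  have hpos : 0 < r ^ 2 + m ^ 2 := by positivity
  rw [norm_div, norm_mul, Real.norm_of_nonneg hpos.le, div_eq_mul_inv]
  exact mul_le_of_le_one_left (by positivity) <|
    mul_le_one₀ (abs_sin_le_one _) (norm_nonneg _) (abs_sin_le_one _)

open ComplexConjugate in
lemma norm_integral_integral_conj_mul_mul_le {𝕜 : Type*} [RCLike 𝕜] {f : ℝ → 𝕜}
    {k : ℝ → ℝ → 𝕜} {a b K : ℝ} (hab : a ≤ b)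
    (hf : IntervalIntegrable (fun s => ‖f s‖ ^ 2) volume a b) (hk : ∀ s s', ‖k s s'‖ ≤ K) :
    ‖∫ s in a..b, ∫ s' in a..b, conj (f s) * f s' * k s s'‖
      ≤ K * (b - a) * ∫ s in a..b, ‖f s‖ ^ 2 := by
  set B := ∫ s in a..b, ‖f s‖ ^ 2
  have hK : 0 ≤ K := (norm_nonneg _).trans (hk a a)
  have hpoint : ∀ s s', ‖conj (f s) * f s' * k s s'‖ ≤ K / 2 * (‖f s‖ ^ 2 + ‖f s'‖ ^ 2) := by
    intro s s'
    rw [norm_mul, norm_mul, RCLike.norm_conj]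
    have := two_mul_le_add_sq ‖f s‖ ‖f s'‖
    have := hk s s'
    nlinarith [mul_nonneg (norm_nonneg (f s)) (norm_nonneg (f s')), norm_nonneg (k s s')]
  have hinner : ∀ s, ‖∫ s' in a..b, conj (f s) * f s' * k s s'‖
      ≤ K / 2 * ((b - a) * ‖f s‖ ^ 2 + B) := fun s => by
    have := norm_integral_le_of_norm_le hab (Eventually.of_forall fun s' _ => hpoint s s')
      ((intervalIntegrable_const.add hf).const_mul _)
    simpa [integral_add intervalIntegrable_const hf] using this
  calc _ ≤ ∫ s in a..b, K / 2 * ((b - a) * ‖f s‖ ^ 2 + B) :=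
        norm_integral_le_of_norm_le hab (Eventually.of_forall fun s _ => hinner s)
          (((hf.const_mul _).add intervalIntegrable_const).const_mul _)
    _ = K * (b - a) * B := by
        simp only [intervalIntegral.integral_const_mul,
          integral_add (hf.const_mul _) intervalIntegrable_const,
          intervalIntegral.integral_const, smul_eq_mul]
        ring

/-- Let `m > 0`.  There is `C = C(m) > 0` such that for every `t > 0`
and every `h ∈ L²([0,t];ℂ)`,
`|∫₀^t∫₀^t h̄(s)h(s') (∫₀^∞ sin((t−s)√(r²+m²)) sin((t−s')√(r²+m²))/(r²+m²) dr) ds ds'|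
  ≤ C t ∫₀^t |h(s)|² ds`. -/
theorem sine_correction_term_bound
    (m : ℝ) (hm : 0 < m) :
    ∃ C > 0, ∀ t : ℝ, 0 < t → ∀ h : ℝ → ℂ,
      MemLp h 2 ((volume : Measure ℝ).restrict (Icc 0 t)) →
      ‖∫ s in (0:ℝ)..t, ∫ s' in (0:ℝ)..t,
          (starRingEnd ℂ) (h s) * h s' *
            Complex.ofReal (∫ r in Ioi (0:ℝ),
              Real.sin ((t - s) * Real.sqrt (r ^ 2 + m ^ 2)) *
                Real.sin ((t - s') * Real.sqrt (r ^ 2 + m ^ 2)) / (r ^ 2 + m ^ 2))‖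
        ≤ C * t * ∫ s in (0:ℝ)..t, ‖h s‖ ^ 2 := by
  refine ⟨π / (2 * m), by positivity, fun t ht h hh => ?_⟩
  have hsq : IntervalIntegrable (fun s => ‖h s‖ ^ 2) volume 0 t := by
    rw [intervalIntegrable_iff_integrableOn_Icc_of_le ht.le]
    exact hh.integrable_norm_pow two_ne_zero
  simpa only [sub_zero] using norm_integral_integral_conj_mul_mul_le ht.le hsq
    fun s s' => by
      rw [Complex.norm_real, Real.norm_eq_abs]
      exact abs_integral_sin_mul_sin_div_sq_add_sq_le hm (t - s) (t - s')
end
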